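/- arXiv:1605.01872 — 4 statements merged into one kernel-verified Lean document; each statement's English description precedes it below -/
import Mathlib

section
/- Let N be a finite-dimensional real normed space and let a, b be nonzero elements of N. Then the distance between the normalized vectors satisfies ‖a/‖a‖ − b/‖b‖‖ ≥ (‖a − b‖ − |‖a‖ − ‖b‖|)/‖b‖. -/
/-!
Compare `a` and `b` through the point `‖b‖ • (a / ‖a‖)`, which lies on the ray of `a` at
distance `|‖a‖ - ‖b‖|` from `a` and, rescaling by `‖b‖`, at distance
`‖b‖ * ‖a / ‖a‖ - b / ‖b‖‖` from `b`; the triangle inequality does the rest.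
-/

namespace NormedSpace

variable {V : Type*} [NormedAddCommGroup V] [NormedSpace ℝ V]

theorem norm_normalize_le_one (x : V) : ‖normalize x‖ ≤ 1 := by
  rcases eq_or_ne x 0 with rfl | hx
  · simp
  · exact (norm_normalize hx).le

theorem norm_sub_smul_normalize_le (a : V) (r : ℝ) : ‖a - r • normalize a‖ ≤ |‖a‖ - r| := by
  calc ‖a - r • normalize a‖ = ‖(‖a‖ - r) • normalize a‖ := by
        rw [sub_smul, norm_smul_normalize]
    _ = |‖a‖ - r| * ‖normalize a‖ := by rw [norm_smul, Real.norm_eq_abs]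
    _ ≤ |‖a‖ - r| := mul_le_of_le_one_right (abs_nonneg _) (norm_normalize_le_one a)

theorem norm_norm_smul_normalize_sub (a b : V) :
    ‖‖b‖ • normalize a - b‖ = ‖b‖ * ‖normalize a - normalize b‖ := by
  calc ‖‖b‖ • normalize a - b‖ = ‖‖b‖ • (normalize a - normalize b)‖ := by
        rw [smul_sub, norm_smul_normalize]
    _ = ‖b‖ * ‖normalize a - normalize b‖ := by rw [norm_smul, norm_norm]

theorem norm_sub_le_abs_norm_sub_add_norm_mul_norm_normalize_sub (a b : V) :
    ‖a - b‖ ≤ |‖a‖ - ‖b‖| + ‖b‖ * ‖normalize a - normalize b‖ :=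
  calc ‖a - b‖ ≤ ‖a - ‖b‖ • normalize a‖ + ‖‖b‖ • normalize a - b‖ :=
        norm_sub_le_norm_sub_add_norm_sub _ _ _
    _ ≤ |‖a‖ - ‖b‖| + ‖b‖ * ‖normalize a - normalize b‖ := by
        rw [norm_norm_smul_normalize_sub]
        exact add_le_add_left (norm_sub_smul_normalize_le a ‖b‖) _

end NormedSpace

theorem bow_and_arrow_general {N : Type*} [NormedAddCommGroup N] [NormedSpace ℝ N]
    (a b : N) :
    (‖a - b‖ - |‖a‖ - ‖b‖|) / ‖b‖ ≤ ‖‖a‖⁻¹ • a - ‖b‖⁻¹ • b‖ := by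
  have htri := NormedSpace.norm_sub_le_abs_norm_sub_add_norm_mul_norm_normalize_sub a b
  refine div_le_of_le_mul₀ (norm_nonneg b) (norm_nonneg _) ?_
  rw [NormedSpace.normalize, NormedSpace.normalize] at htri
  linarith

/-- The "bow-and-arrow" inequality of Füredi and Loeb. -/
theorem bow_and_arrow {N : Type*} [NormedAddCommGroup N] [NormedSpace ℝ N]
    [FiniteDimensional ℝ N] (a b : N) (ha : a ≠ 0) (hb : b ≠ 0) :
    (‖a - b‖ - |‖a‖ - ‖b‖|) / ‖b‖ ≤ ‖‖a‖⁻¹ • a - ‖b‖⁻¹ • b‖ :=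
  bow_and_arrow_general a b
end

section
/- Let N be a real normed space and define π : N → N by π(x) = x if ‖x‖ ≤ 2 and π(x) = (2/‖x‖)x if ‖x‖ ≥ 2. Let v₁, v₂ ∈ N and λ₁, λ₂ ∈ ℝ satisfy max{λ₁, λ₂} ≥ 1, ‖v₁ − v₂‖ ≥ max{λ₁, λ₂}, ‖v₁‖ ≤ λ₁ + 1, and ‖v₂‖ ≤ λ₂ + 1. Then ‖π(v₁) − π(v₂)‖ ≥ 1. -/
/-!
The hypotheses give `‖v₁ - v₂‖ ≥ 1` and `‖vᵢ‖ - 1 ≤ ‖v₁ - v₂‖`. Say `‖v₁‖ ≤ ‖v₂‖` and write `ρ` for the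
radial retraction onto the ball of radius `r`. Moving `v₂` radially inward to norm `s` changes
`‖v₁ - v₂‖` by at most `‖v₂‖ - s`. If only `v₂` leaves the ball, take `s = r`: this gives
`‖v₁ - ρ v₂‖ ≥ (‖v₂‖ - 1) - (‖v₂‖ - r) = r - 1`. If both leave it, take `s = ‖v₁‖`, so that
`‖v₁ - s/‖v₂‖ • v₂‖ ≥ ‖v₁‖ - 1`; scaling by `r / ‖v₁‖` then gives `ρ v₁ - ρ v₂`, of norm at least
`r (1 - 1/‖v₁‖) ≥ r - 1`. Hence `‖ρ v₁ - ρ v₂‖ ≥ min ‖v₁ - v₂‖ (r - 1)`, which is `≥ 1` for `r = 2`.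
-/

section

variable {E : Type*} [SeminormedAddCommGroup E] [NormedSpace ℝ E]

noncomputable def radialRetraction (r : ℝ) (x : E) : E :=
  if ‖x‖ ≤ r then x else (r / ‖x‖) • x

lemma norm_sub_le_norm_sub_smul_add {x y : E} {t : ℝ} (ht : t ≤ 1) :
    ‖x - y‖ ≤ ‖x - t • y‖ + (1 - t) * ‖y‖ :=
  calc ‖x - y‖ = ‖(x - t • y) - (1 - t) • y‖ := by rw [sub_smul, one_smul]; abel_nf
    _ ≤ ‖x - t • y‖ + ‖(1 - t) • y‖ := norm_sub_le _ _
    _ = ‖x - t • y‖ + (1 - t) * ‖y‖ := by rw [norm_smul, Real.norm_of_nonneg (sub_nonneg.2 ht)]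

lemma norm_sub_sub_le_norm_sub_radialRetraction {r : ℝ} (x : E) {y : E} (hr : 0 < r)
    (hy : r < ‖y‖) : ‖x - y‖ - (‖y‖ - r) ≤ ‖x - radialRetraction r y‖ := by
  have hy₀ : 0 < ‖y‖ := hr.trans hy
  have hscale : (1 - r / ‖y‖) * ‖y‖ = ‖y‖ - r := by field_simp
  have htri := norm_sub_le_norm_sub_smul_add (x := x) (y := y) (div_le_one_of_le₀ hy.le hy₀.le)
  rw [radialRetraction, if_neg hy.not_ge]
  linarith

lemma mul_norm_sub_sub_le_norm_radialRetraction_sub {r : ℝ} {x y : E} (hr : 0 < r)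
    (hx : r < ‖x‖) (hxy : ‖x‖ ≤ ‖y‖) :
    r / ‖x‖ * (‖x - y‖ - (‖y‖ - ‖x‖)) ≤ ‖radialRetraction r x - radialRetraction r y‖ := by
  have hx₀ : 0 < ‖x‖ := hr.trans hx
  have hy₀ : 0 < ‖y‖ := hx₀.trans_le hxy
  have hfactor : (r / ‖x‖) • x - (r / ‖y‖) • y = (r / ‖x‖) • (x - (‖x‖ / ‖y‖) • y) := by
    rw [smul_sub, smul_smul]
    congr 2
    field_simp
  have hscale : (1 - ‖x‖ / ‖y‖) * ‖y‖ = ‖y‖ - ‖x‖ := by field_simp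
  have htri := norm_sub_le_norm_sub_smul_add (x := x) (y := y) (div_le_one_of_le₀ hxy hy₀.le)
  rw [radialRetraction, radialRetraction, if_neg hx.not_ge, if_neg (hx.trans_le hxy).not_ge,
    hfactor, norm_smul, Real.norm_of_nonneg (by positivity)]
  gcongr
  linarith

theorem min_le_norm_radialRetraction_sub {r : ℝ} {x y : E} (hr : 0 < r)
    (h : max ‖x‖ ‖y‖ - 1 ≤ ‖x - y‖) :
    min ‖x - y‖ (r - 1) ≤ ‖radialRetraction r x - radialRetraction r y‖ := by
  wlog hxy : ‖x‖ ≤ ‖y‖ generalizing x y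
  · rw [norm_sub_rev (radialRetraction r x), norm_sub_rev x]
    exact this (by rwa [max_comm, norm_sub_rev]) (le_of_not_ge hxy)
  rw [max_eq_right hxy] at h
  rcases le_or_gt ‖y‖ r with hy | hy
  · rw [radialRetraction, radialRetraction, if_pos hy, if_pos (hxy.trans hy)]
    exact min_le_left _ _
  rcases le_or_gt ‖x‖ r with hx | hx
  · have hmoved := norm_sub_sub_le_norm_sub_radialRetraction x hr hy
    rw [radialRetraction, if_pos hx]
    linarith [min_le_right ‖x - y‖ (r - 1)]
  have hx₀ : 0 < ‖x‖ := hr.trans hx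
  calc min ‖x - y‖ (r - 1) ≤ r - 1 := min_le_right _ _
    _ ≤ r / ‖x‖ * (‖x‖ - 1) := by
      rw [mul_sub, div_mul_cancel₀ _ hx₀.ne', mul_one]
      gcongr
      exact div_le_one_of_le₀ hx.le hx₀.le
    _ ≤ r / ‖x‖ * (‖x - y‖ - (‖y‖ - ‖x‖)) :=
      mul_le_mul_of_nonneg_left (by linarith) (by positivity)
    _ ≤ _ := mul_norm_sub_sub_le_norm_radialRetraction_sub hr hx hxy

end

/-- The satellite lemma: the radial retraction onto the ball of radius 2
keeps the two points at distance at least 1. -/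
theorem satellite_lemma {N : Type*} [NormedAddCommGroup N] [NormedSpace ℝ N]
    (π : N → N)
    (hπ : ∀ x : N, π x = if ‖x‖ ≤ 2 then x else (2 / ‖x‖) • x)
    (v₁ v₂ : N) (l₁ l₂ : ℝ)
    (hmax : 1 ≤ max l₁ l₂)
    (hdist : max l₁ l₂ ≤ ‖v₁ - v₂‖)
    (hv₁ : ‖v₁‖ ≤ l₁ + 1)
    (hv₂ : ‖v₂‖ ≤ l₂ + 1) :
    1 ≤ ‖π v₁ - π v₂‖ := by
  have hπ_eq : π = radialRetraction 2 := funext hπ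
  have hnorm : max ‖v₁‖ ‖v₂‖ - 1 ≤ ‖v₁ - v₂‖ := by
    have hle := max_le_max hv₁ hv₂
    rw [max_add_add_right] at hle
    linarith
  have hbound := min_le_norm_radialRetraction_sub two_pos hnorm
  rwa [show (2 : ℝ) - 1 = 1 by norm_num, min_eq_right (hmax.trans hdist), ← hπ_eq] at hbound
end

section
/- Let N be a real normed space and define π : N → N by π(x) = x if ‖x‖ ≤ 2 and π(x) = (2/‖x‖)x if ‖x‖ ≥ 2. If v₁, v₂ ∈ N both satisfy ‖vᵢ‖ ≥ 2 and ‖v₂‖ ≤ ‖v₁‖, and ‖v₁ − v₂‖ ≥ λ₁ ≥ 1 with ‖v₁‖ ≤ λ₁ + 1 and ‖v₂‖ ≤ 3, then ‖π(v₁) − π(v₂)‖ = ‖2·v₁/‖v₁‖ − 2·v₂/‖v₂‖‖ ≥ 1. -/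
/-!
Outside the ball of radius 2 the retraction is `v ↦ 2 • (‖v‖⁻¹ • v)`, so it suffices to bound
the distance of the directions of `v₁` and `v₂` from below. By the bow-and-arrow inequality this
distance is at least `(‖v₁ - v₂‖ - (‖v₁‖ - ‖v₂‖)) / ‖v₂‖ ≥ (‖v₂‖ - 1) / ‖v₂‖`, which is at
least `1 / 2` as soon as `‖v₂‖ ≥ 2`.
-/

section

variable {E : Type*} [NormedAddCommGroup E] [NormedSpace ℝ E]

theorem sub_abs_norm_sub_norm_div_le_norm_inv_norm_smul_sub {a b : E} (hb : b ≠ 0) :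
    (‖a - b‖ - |‖a‖ - ‖b‖|) / ‖b‖ ≤ ‖‖a‖⁻¹ • a - ‖b‖⁻¹ • b‖ := by
  have hb' : 0 < ‖b‖ := norm_pos_iff.2 hb
  -- The arrow `a - b` is rescaled by `‖b‖⁻¹`; the bow `(‖a‖⁻¹ - ‖b‖⁻¹) • a` is the error.
  have hsplit : ‖a‖⁻¹ • a - ‖b‖⁻¹ • b = ‖b‖⁻¹ • (a - b) + (‖a‖⁻¹ - ‖b‖⁻¹) • a := by
    rw [smul_sub, sub_smul]; abel
  have hbow : ‖(‖a‖⁻¹ - ‖b‖⁻¹) • a‖ ≤ |‖a‖ - ‖b‖| / ‖b‖ := by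
    rcases eq_or_ne a 0 with rfl | ha
    · simp only [smul_zero, norm_zero]; positivity
    have hcoeff : (‖a‖⁻¹ - ‖b‖⁻¹) * ‖a‖ = (‖b‖ - ‖a‖) / ‖b‖ := by field_simp
    rw [norm_smul, Real.norm_eq_abs, ← abs_norm a, ← abs_mul, abs_norm, hcoeff, abs_div,
      abs_norm, abs_sub_comm]
  calc (‖a - b‖ - |‖a‖ - ‖b‖|) / ‖b‖
      ≤ ‖‖b‖⁻¹ • (a - b)‖ - ‖(‖a‖⁻¹ - ‖b‖⁻¹) • a‖ := by
        rw [norm_smul, norm_inv, norm_norm, sub_div, inv_mul_eq_div]; linarith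
    _ ≤ ‖‖a‖⁻¹ • a - ‖b‖⁻¹ • b‖ := hsplit ▸ norm_sub_le_norm_add _ _

theorem ite_norm_le_smul_of_le_norm {r : ℝ} (hr : 0 < r) {x : E} (hx : r ≤ ‖x‖) :
    (if ‖x‖ ≤ r then x else (r / ‖x‖) • x) = r • (‖x‖⁻¹ • x) := by
  rw [smul_smul, ← div_eq_mul_inv]
  split_ifs with h
  · rw [le_antisymm h hx, div_self hr.ne', one_smul]
  · rfl

end

theorem satellite_lemma_both_outside_general {N : Type*} [NormedAddCommGroup N] [NormedSpace ℝ N]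
    (π : N → N)
    (hπ : ∀ x : N, π x = if ‖x‖ ≤ 2 then x else (2 / ‖x‖) • x)
    (v₁ v₂ : N) (l₁ : ℝ)
    (h₁ : 2 ≤ ‖v₁‖) (h₂ : 2 ≤ ‖v₂‖) (h₂₁ : ‖v₂‖ ≤ ‖v₁‖)
    (hdist : l₁ ≤ ‖v₁ - v₂‖)
    (hv₁ : ‖v₁‖ ≤ l₁ + 1) :
    ‖π v₁ - π v₂‖ = ‖(2 : ℝ) • (‖v₁‖⁻¹ • v₁) - (2 : ℝ) • (‖v₂‖⁻¹ • v₂)‖ ∧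
      1 ≤ ‖π v₁ - π v₂‖ := by
  have hπv : ∀ v : N, 2 ≤ ‖v‖ → π v = (2 : ℝ) • (‖v‖⁻¹ • v) := fun v hv =>
    (hπ v).trans (ite_norm_le_smul_of_le_norm two_pos hv)
  rw [hπv v₁ h₁, hπv v₂ h₂]
  refine ⟨rfl, ?_⟩
  have hv₂ : 0 < ‖v₂‖ := by linarith
  have hbow := sub_abs_norm_sub_norm_div_le_norm_inv_norm_smul_sub (a := v₁)
    (norm_pos_iff.1 hv₂)
  rw [abs_of_nonneg (sub_nonneg.2 h₂₁)] at hbow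
  have hhalf : 1 / 2 ≤ (‖v₁ - v₂‖ - (‖v₁‖ - ‖v₂‖)) / ‖v₂‖ := by
    rw [div_le_div_iff₀ two_pos hv₂]; linarith
  rw [← smul_sub, norm_smul, Real.norm_two]
  linarith

/-- The case of the satellite lemma in which both points lie outside the
ball of radius 2. -/
theorem satellite_lemma_both_outside {N : Type*} [NormedAddCommGroup N] [NormedSpace ℝ N]
    (π : N → N)
    (hπ : ∀ x : N, π x = if ‖x‖ ≤ 2 then x else (2 / ‖x‖) • x)
    (v₁ v₂ : N) (l₁ : ℝ)
    (h₁ : 2 ≤ ‖v₁‖) (h₂ : 2 ≤ ‖v₂‖) (h₂₁ : ‖v₂‖ ≤ ‖v₁‖)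
    (hl : 1 ≤ l₁) (hdist : l₁ ≤ ‖v₁ - v₂‖)
    (hv₁ : ‖v₁‖ ≤ l₁ + 1) (hv₂ : ‖v₂‖ ≤ 3) :
    ‖π v₁ - π v₂‖ = ‖(2 : ℝ) • (‖v₁‖⁻¹ • v₁) - (2 : ℝ) • (‖v₂‖⁻¹ • v₂)‖ ∧
      1 ≤ ‖π v₁ - π v₂‖ :=
  satellite_lemma_both_outside_general π hπ v₁ v₂ l₁ h₁ h₂ h₂₁ hdist hv₁
end

section
/- Let c₁, …, c_m be distinct points in a real normed space N, let k ∈ ℕ with k ≥ 1 and m ≥ k + 1, and for each i let r_i denote the smallest r ≥ 0 such that the set {j : j ≠ i, ‖c_i − c_j‖ ≤ r} has at least k elements. Let H be the graph on {1, …, m} in which i and j are adjacent whenever ‖c_i − c_j‖ < max{r_i, r_j}. Then the chromatic number of H is at most k. -/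
/-!
Order the points by radius, breaking ties by index. A neighbour `c_j` of `c_i` in `H` that comes
earlier in this order has `r_j ≤ r_i`, so `‖c_i - c_j‖ < r_i`; by minimality of `r_i`, fewer than
`k` points lie that close to `c_i`. Every vertex thus has fewer than `k` earlier neighbours, and
the greedy colouring along the order uses at most `k` colours.
-/

open Function

namespace SimpleGraph

section Greedy

variable {V : Type*} (G : SimpleGraph V) [LinearOrder V] [WellFoundedLT V]

noncomputable def greedyColor : V → ℕ :=
  wellFounded_lt.fix fun v color => sInf {n | ∀ u (hu : u < v), G.Adj v u → color u hu ≠ n}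

theorem greedyColor_eq (v : V) :
    G.greedyColor v = sInf {n | ∀ u < v, G.Adj v u → G.greedyColor u ≠ n} :=
  wellFounded_lt.fix_eq _ v

variable {G} {k : ℕ} (hk : ∀ v, {u | G.Adj v u ∧ u < v}.encard < k)
include hk

theorem exists_lt_forall_greedyColor_ne (v : V) :
    ∃ n < k, ∀ u < v, G.Adj v u → G.greedyColor u ≠ n := by
  have hcard :
      (G.greedyColor '' {u | G.Adj v u ∧ u < v}).encard < (Finset.range k : Set ℕ).encard :=
    calc _ ≤ {u | G.Adj v u ∧ u < v}.encard := Set.encard_image_le _ _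
      _ < k := hk v
      _ = _ := by rw [Set.encard_coe_eq_coe_finsetCard, Finset.card_range]
  obtain ⟨n, hn, hfree⟩ := Set.not_subset.mp fun h => (Set.encard_le_encard h).not_gt hcard
  exact ⟨n, by simpa using hn, fun u hu huv hun => hfree ⟨u, ⟨huv, hu⟩, hun⟩⟩

theorem greedyColor_lt (v : V) : G.greedyColor v < k := by
  obtain ⟨n, hnk, hn⟩ := exists_lt_forall_greedyColor_ne hk v
  rw [greedyColor_eq]
  exact lt_of_le_of_lt (Nat.sInf_le hn) hnk

theorem greedyColor_ne_of_adj_of_lt {u v : V} (huv : G.Adj v u) (hu : u < v) :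
    G.greedyColor u ≠ G.greedyColor v := by
  obtain ⟨n, -, hn⟩ := exists_lt_forall_greedyColor_ne hk v
  have hmem : G.greedyColor v ∈ {n | ∀ u < v, G.Adj v u → G.greedyColor u ≠ n} := by
    rw [greedyColor_eq]
    exact Nat.sInf_mem ⟨n, hn⟩
  exact hmem u hu huv

noncomputable def greedyColoring : G.Coloring (Fin k) :=
  Coloring.mk (fun v => ⟨G.greedyColor v, greedyColor_lt hk v⟩) fun {u v} huv => by
    rw [Ne, Fin.mk.injEq]
    rcases lt_or_gt_of_ne (G.ne_of_adj huv) with h | h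
    · exact greedyColor_ne_of_adj_of_lt hk huv.symm h
    · exact (greedyColor_ne_of_adj_of_lt hk huv h).symm

theorem colorable_of_encard_lt : G.Colorable k :=
  ⟨greedyColoring hk⟩

end Greedy

theorem colorable_of_injective_of_encard_lt {V α : Type*} [Finite V] [LinearOrder α]
    {G : SimpleGraph V} {k : ℕ} (f : V → α) (hf : Injective f)
    (hk : ∀ v, {u | G.Adj v u ∧ f u < f v}.encard < k) : G.Colorable k :=
  letI := LinearOrder.lift' f hf
  haveI : WellFoundedLT V := Finite.to_wellFoundedLT
  colorable_of_encard_lt hk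

end SimpleGraph

theorem encard_lt_of_isLeast_ncard_le {ι : Type*} [Finite ι] {p : ι → Prop} {d : ι → ℝ}
    (hd : ∀ j, 0 ≤ d j) {k : ℕ} (hk : 1 ≤ k) {ρ₀ : ℝ}
    (hρ₀ : IsLeast {ρ : ℝ | 0 ≤ ρ ∧ k ≤ {j | p j ∧ d j ≤ ρ}.ncard} ρ₀) :
    {j | p j ∧ d j < ρ₀}.encard < k := by
  set S := {j | p j ∧ d j < ρ₀}
  by_contra! hS
  have hkS : k ≤ S.ncard := by
    rw [← ENat.natCast_le_natCast, S.toFinite.cast_ncard_eq]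
    exact hS
  have hSne : S.Nonempty := Set.nonempty_of_ncard_ne_zero (by omega)
  obtain ⟨j₀, ⟨-, hj₀⟩, hmax⟩ := S.exists_max_image d S.toFinite hSne
  have hsub : S ⊆ {j | p j ∧ d j ≤ d j₀} := fun j hj => ⟨hj.1, hmax j hj⟩
  have hρ₀_le : ρ₀ ≤ d j₀ := hρ₀.2 ⟨hd j₀, hkS.trans (Set.ncard_le_ncard hsub)⟩
  exact hρ₀_le.not_gt hj₀

theorem auxiliary_graph_chromaticNumber_general {N : Type*} [NormedAddCommGroup N]
    (m k : ℕ) (hk : 1 ≤ k)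
    (c : Fin m → N)
    (r : Fin m → ℝ)
    (hr : ∀ i : Fin m,
      IsLeast {ρ : ℝ | 0 ≤ ρ ∧ k ≤ {j : Fin m | j ≠ i ∧ ‖c i - c j‖ ≤ ρ}.ncard} (r i))
    (H : SimpleGraph (Fin m))
    (hH : ∀ i j : Fin m, H.Adj i j ↔ i ≠ j ∧ ‖c i - c j‖ < max (r i) (r j)) :
    H.chromaticNumber ≤ k := by
  have hball (i : Fin m) : {j | j ≠ i ∧ ‖c i - c j‖ < r i}.encard < k :=
    encard_lt_of_isLeast_ncard_le (fun _ => norm_nonneg _) hk (hr i)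
  refine (H.colorable_of_injective_of_encard_lt (fun i => toLex (r i, i))
    (fun i j h => congrArg Prod.snd h) fun i => ?_).chromaticNumber_le
  refine lt_of_le_of_lt (Set.encard_le_encard fun j ⟨hij, hlt⟩ => ?_) (hball i)
  obtain ⟨hne, hdist⟩ := (hH i j).1 hij
  exact ⟨hne.symm, hdist.trans_eq (max_eq_left (Prod.Lex.monotone_fst _ _ hlt.le))⟩

/-- The chromatic number of the auxiliary graph `H` is at most `k`. -/
theorem auxiliary_graph_chromaticNumber {N : Type*} [NormedAddCommGroup N] [NormedSpace ℝ N]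
    [FiniteDimensional ℝ N]
    (m k : ℕ) (hk : 1 ≤ k) (hm : k + 1 ≤ m)
    (c : Fin m → N) (hc : Function.Injective c)
    (r : Fin m → ℝ)
    (hr : ∀ i : Fin m,
      IsLeast {ρ : ℝ | 0 ≤ ρ ∧ k ≤ {j : Fin m | j ≠ i ∧ ‖c i - c j‖ ≤ ρ}.ncard} (r i))
    (H : SimpleGraph (Fin m))
    (hH : ∀ i j : Fin m, H.Adj i j ↔ i ≠ j ∧ ‖c i - c j‖ < max (r i) (r j)) :
    H.chromaticNumber ≤ k :=
  auxiliary_graph_chromaticNumber_general m k hk c r hr H hH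
end
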